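/- arXiv:2602.08933 — 5 statements merged into one kernel-verified Lean document; each statement's English description precedes it below -/
import Mathlib

section
/- If f : ℝ → ℝ is a probability density on ℝ that is positive everywhere and log-concave (i.e., log f is concave), then f has at most exponential tails: there exist constants a > 0 and b ∈ ℝ such that f(s) ≤ exp(-a·|s| + b) for all s ∈ ℝ. -/
/-!
Integrability forces the positive density `f` to drop below `f 0` somewhere on each side of `0`.
Once the concave function `log f` has a point `p > 0` with `log f p < log f 0`, it stays below the
secant line through `0` and `p` beyond `p`, a line of negative slope; on `[0, p]` it is bounded
by the secant line through `-1` and `0`. Reflecting `s ↦ -s` handles the negative half-line.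
-/

open MeasureTheory Real

lemma MeasureTheory.Integrable.exists_lt_of_measure_eq_top {α : Type*} [MeasurableSpace α]
    {μ : Measure α} {f : α → ℝ} (hf : Integrable f μ) {c : ℝ} (hc : 0 < c) {s : Set α}
    (hs : μ s = ⊤) : ∃ t ∈ s, f t < c := by
  by_contra! h
  have hsub : s ⊆ {t | c ≤ f t} := h
  exact (measure_mono hsub).not_gt (hs ▸ hf.measure_ge_lt_top hc)

namespace ConcaveOn

variable {g : ℝ → ℝ}

lemma le_add_slope_mul_sub (hg : ConcaveOn ℝ Set.univ g) {x y z : ℝ} (hxy : x < y) (hyz : y ≤ z) :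
    g z ≤ g y + (g y - g x) / (y - x) * (z - y) := by
  rcases hyz.eq_or_lt with rfl | hyz
  · simp
  have hslope := hg.slope_anti_adjacent (Set.mem_univ x) (Set.mem_univ z) hxy hyz
  rw [div_le_iff₀ (sub_pos.mpr hyz)] at hslope
  linarith

lemma exists_le_neg_mul_add_of_lt (hg : ConcaveOn ℝ Set.univ g) {p : ℝ} (hp : 0 < p)
    (hgp : g p < g 0) : ∃ a > 0, ∃ b, ∀ s, 0 ≤ s → g s ≤ -a * s + b := by
  set a := (g 0 - g p) / p
  set c := g 0 - g (-1)
  refine ⟨a, div_pos (sub_pos.mpr hgp) hp, g 0 + (|c| + a) * p, fun s hs => ?_⟩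
  have ha : 0 ≤ a := div_nonneg (sub_pos.mpr hgp).le hp.le
  rcases le_total p s with hps | hsp
  · have hright := hg.le_add_slope_mul_sub hp hps
    have hline : g p + (g p - g 0) / (p - 0) * (s - p) = g 0 - a * s := by
      simp only [a, sub_zero]; field_simp; ring
    have : 0 ≤ (|c| + a) * p := by positivity
    linarith
  · have hleft := hg.le_add_slope_mul_sub (by norm_num : (-1 : ℝ) < 0) hs
    have hline : g 0 + (g 0 - g (-1)) / (0 - -1) * (s - 0) = g 0 + c * s := by
      simp only [c]; ring
    have hcs : c * s ≤ |c| * p :=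
      (mul_le_mul_of_nonneg_right (le_abs_self c) hs).trans
        (mul_le_mul_of_nonneg_left hsp (abs_nonneg c))
    have has : a * s ≤ a * p := mul_le_mul_of_nonneg_left hsp ha
    linarith

lemma exists_le_neg_mul_abs_add (hg : ConcaveOn ℝ Set.univ g) {p q : ℝ} (hp : 0 < p)
    (hgp : g p < g 0) (hq : q < 0) (hgq : g q < g 0) :
    ∃ a > 0, ∃ b, ∀ s, g s ≤ -a * |s| + b := by
  have hg' : ConcaveOn ℝ Set.univ (fun s => g (-s)) :=
    hg.comp_linearMap (-LinearMap.id)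
  obtain ⟨a₁, ha₁, b₁, hright⟩ := hg.exists_le_neg_mul_add_of_lt hp hgp
  obtain ⟨a₂, ha₂, b₂, hleft⟩ :=
    hg'.exists_le_neg_mul_add_of_lt (neg_pos.mpr hq) (by simpa using hgq)
  refine ⟨min a₁ a₂, lt_min ha₁ ha₂, max b₁ b₂, fun s => ?_⟩
  rcases le_total 0 s with hs | hs
  · have := hright s hs
    rw [abs_of_nonneg hs]
    linarith [mul_le_mul_of_nonneg_right (min_le_left a₁ a₂) hs, le_max_left b₁ b₂]
  · have := hleft (-s) (neg_nonneg.mpr hs)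
    rw [neg_neg] at this
    rw [abs_of_nonpos hs]
    linarith [mul_le_mul_of_nonneg_right (min_le_right a₁ a₂) (neg_nonneg.mpr hs),
      le_max_right b₁ b₂]

end ConcaveOn

theorem logconcave_density_exponential_tails_general
    (f : ℝ → ℝ)
    (hint : ∫ x, f x = 1)
    (hpos : ∀ x, 0 < f x)
    (hconc : ConcaveOn ℝ Set.univ (fun x => Real.log (f x))) :
    ∃ a > 0, ∃ b : ℝ, ∀ s : ℝ, f s ≤ Real.exp (-a * |s| + b) := by
  have hf : Integrable f := by
    by_contra h
    simp [integral_undef h] at hint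
  obtain ⟨p, hp, hfp⟩ := hf.exists_lt_of_measure_eq_top (hpos 0) (volume_Ioi (a := 0))
  obtain ⟨q, hq, hfq⟩ := hf.exists_lt_of_measure_eq_top (hpos 0) (volume_Iio (a := 0))
  obtain ⟨a, ha, b, hbound⟩ := hconc.exists_le_neg_mul_abs_add hp
    (log_lt_log (hpos p) hfp) hq (log_lt_log (hpos q) hfq)
  refine ⟨a, ha, b, fun s => ?_⟩
  calc f s = exp (log (f s)) := (exp_log (hpos s)).symm
    _ ≤ exp (-a * |s| + b) := exp_le_exp.mpr (hbound s)

theorem logconcave_density_exponential_tails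
    (f : ℝ → ℝ)
    (hmeas : Measurable f)
    (hnonneg : ∀ x, 0 ≤ f x)
    (hint : ∫ x, f x = 1)
    (hpos : ∀ x, 0 < f x)
    (hconc : ConcaveOn ℝ Set.univ (fun x => Real.log (f x))) :
    ∃ a > 0, ∃ b : ℝ, ∀ s : ℝ, f s ≤ Real.exp (-a * |s| + b) :=
  logconcave_density_exponential_tails_general f hint hpos hconc
end

section
/- If f : ℝ → ℝ is a positive log-concave probability density on ℝ, then f has finite moments of all orders: for every natural number k, the integral ∫ |s|^k · f(s) ds over ℝ is finite. -/
open MeasureTheory Real Set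

/-!
Write `f = exp ∘ g` with `g` concave. Integrability of `f` on `[0, ∞)` forces `g v < g 0` for some
`v > 0`, and concavity then keeps `g` below the chord line through `0` and `v` beyond `v`: this is
the exponential tail bound `f s ≤ exp (g 0 - a s)` with `a > 0`. Against an exponentially decaying
tail every power of `|s|` is integrable; the compact middle part is handled by continuity of
concave functions, and the left tail by reflecting `s ↦ -s`.
-/

lemma not_integrableOn_Ici_of_forall_le {h : ℝ → ℝ} {a c : ℝ} (hc : 0 < c)
    (hle : ∀ s ∈ Ici a, c ≤ h s) : ¬ IntegrableOn h (Ici a) := by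
  intro hint
  have hconst : IntegrableOn (fun _ => c) (Ici a) :=
    hint.mono' aestronglyMeasurable_const <| (ae_restrict_mem measurableSet_Ici).mono
      fun s hs => (norm_of_nonneg hc.le).trans_le (hle s hs)
  simp [hc.ne'] at hconst

lemma integrableOn_Ioi_pow_mul_exp_neg_mul {a : ℝ} (ha : 0 < a) (k : ℕ) :
    IntegrableOn (fun x : ℝ => x ^ k * exp (-a * x)) (Ioi 0) := by
  simpa using integrableOn_rpow_mul_exp_neg_mul_rpow (s := k) (p := 1)
    (by linarith [(k.cast_nonneg : (0 : ℝ) ≤ k)]) one_pos ha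

namespace ConcaveOn

variable {g : ℝ → ℝ}

theorem exists_le_sub_mul_of_integrableOn_exp (hg : ConcaveOn ℝ univ g)
    (hint : IntegrableOn (fun x => exp (g x)) (Ici 0)) :
    ∃ a > 0, ∃ v > 0, ∀ s ≥ v, g s ≤ g 0 - a * s := by
  obtain ⟨v, hv, hlt⟩ : ∃ v > 0, g v < g 0 := by
    by_contra! hge
    refine not_integrableOn_Ici_of_forall_le (exp_pos (g 0)) (fun s hs => ?_) hint
    rcases (mem_Ici.1 hs).eq_or_lt with rfl | hs
    · rfl
    · exact exp_le_exp.2 (hge s hs)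
  set a := (g 0 - g v) / v with ha_def
  have hchord : g v = g 0 - a * v := by rw [ha_def]; field_simp; ring
  refine ⟨a, div_pos (by linarith) hv, v, hv, fun s hs => ?_⟩
  rcases hs.eq_or_lt with rfl | hs
  · exact hchord.le
  · have hslope := hg.slope_anti_adjacent (mem_univ 0) (mem_univ s) hv hs
    rw [sub_zero, show (g v - g 0) / v = -a by rw [ha_def]; ring,
      div_le_iff₀ (sub_pos.2 hs)] at hslope
    linarith

theorem integrableOn_Ici_abs_pow_mul_exp (hg : ConcaveOn ℝ univ g)
    (hint : IntegrableOn (fun x => exp (g x)) (Ici 0)) (k : ℕ) :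
    IntegrableOn (fun s => |s| ^ k * exp (g s)) (Ici 0) := by
  obtain ⟨a, ha, v, hv, hbound⟩ := hg.exists_le_sub_mul_of_integrableOn_exp hint
  have hcont : Continuous fun s => |s| ^ k * exp (g s) := by
    have : Continuous g := continuousOn_univ.1 (hg.continuousOn isOpen_univ)
    fun_prop
  have htail : IntegrableOn (fun s => |s| ^ k * exp (g s)) (Ici v) := by
    refine (IntegrableOn.mono_set ((integrableOn_Ioi_pow_mul_exp_neg_mul ha k).const_mul
      (exp (g 0))) (Ici_subset_Ioi.2 hv)).mono' hcont.aestronglyMeasurable.restrict ?_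
    filter_upwards [ae_restrict_mem measurableSet_Ici] with s hs
    calc ‖|s| ^ k * exp (g s)‖ = s ^ k * exp (g s) := by
          rw [norm_of_nonneg (by positivity), abs_of_pos (hv.trans_le hs)]
      _ ≤ s ^ k * exp (g 0 - a * s) := by
          gcongr
          · exact pow_nonneg (hv.trans_le hs).le k
          · exact hbound s hs
      _ = exp (g 0) * (s ^ k * exp (-a * s)) := by rw [sub_eq_add_neg, exp_add, neg_mul]; ring
  rw [← Icc_union_Ici_eq_Ici hv.le]
  exact hcont.integrableOn_Icc.union htail

theorem integrable_abs_pow_mul_exp (hg : ConcaveOn ℝ univ g)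
    (hint : Integrable fun x => exp (g x)) (k : ℕ) :
    Integrable fun s => |s| ^ k * exp (g s) := by
  have hright := hg.integrableOn_Ici_abs_pow_mul_exp hint.integrableOn k
  have hreflect : ConcaveOn ℝ univ fun x => g (-x) := hg.comp_linearMap (-LinearMap.id)
  have hleft : IntegrableOn (fun s => |s| ^ k * exp (g s)) (Iic 0) := by
    have hint' : IntegrableOn (fun x => exp (g (-x))) (Ici 0) := hint.comp_neg.integrableOn
    have hmirror := hreflect.integrableOn_Ici_abs_pow_mul_exp hint' k
    -- unifying `Ici 0` with `Ici (-?c)` by unfolding `-0` on `ℝ` times out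
    rw [← neg_zero] at hmirror
    simpa only [neg_zero, neg_neg, abs_neg] using hmirror.comp_neg_Iic
  rw [← integrableOn_univ, ← Iic_union_Ici (a := (0 : ℝ))]
  exact hleft.union hright

end ConcaveOn

theorem logconcave_density_finite_moments_general
    (f : ℝ → ℝ)
    (hpos : ∀ x, 0 < f x)
    (hint : ∫ x, f x = 1)
    (hconc : ConcaveOn ℝ Set.univ (fun x => Real.log (f x))) :
    ∀ k : ℕ, Integrable (fun s : ℝ => |s| ^ k * f s) := by
  intro k
  have hf : Integrable f := by
    by_contra h
    rw [integral_undef h] at hint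
    exact zero_ne_one hint
  have hexp : ∀ x, exp (log (f x)) = f x := fun x => exp_log (hpos x)
  simpa only [hexp] using hconc.integrable_abs_pow_mul_exp (by simpa only [hexp] using hf) k

theorem logconcave_density_finite_moments
    (f : ℝ → ℝ)
    (hmeas : Measurable f)
    (hpos : ∀ x, 0 < f x)
    (hint : ∫ x, f x = 1)
    (hconc : ConcaveOn ℝ Set.univ (fun x => Real.log (f x))) :
    ∀ k : ℕ, Integrable (fun s : ℝ => |s| ^ k * f s) :=
  logconcave_density_finite_moments_general f hpos hint hconc
end

section
/- If f : ℝ → ℝ is a positive log-concave probability density, then its moment generating function is finite in a neighborhood of zero: there exists a > 0 such that for all t with |t| < a, the integral ∫ exp(t·s) · f(s) ds over ℝ is finite. -/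
/-!
A positive integrable function on `ℝ` cannot be monotone, so `log f` strictly decreases
somewhere. A concave function lies below its secant lines outside the secant interval, so past
that point `log f` decays at least linearly, while continuity of the concave function `log f`
bounds it on the compact stretch between `0` and that point; the same argument applied to
`s ↦ f (-s)` handles the negative half-line. Hence `f s ≤ exp (b - a * |s|)` for some `a > 0`,
and `exp (t * s) * f s` is dominated by the integrable `exp b * exp (-(a - |t|) * |s|)` as soon
as `|t| < a`.
-/

open MeasureTheory Real Set

lemma integrable_exp_neg_mul_abs {c : ℝ} (hc : 0 < c) :
    Integrable fun x : ℝ => exp (-c * |x|) := by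
  rw [← integrableOn_univ, ← Iic_union_Ioi (a := 0)]
  refine IntegrableOn.union ?_ ?_
  · refine (integrableOn_exp_mul_Iic hc 0).congr_fun (fun x hx => ?_) measurableSet_Iic
    rw [abs_of_nonpos hx, mul_neg, neg_mul, neg_neg]
  · refine (integrableOn_exp_mul_Ioi (neg_neg_of_pos hc) 0).congr_fun (fun x hx => ?_)
      measurableSet_Ioi
    rw [abs_of_pos hx]

lemma not_monotone_of_integrable_of_pos {f : ℝ → ℝ} (hf : Integrable f) (hpos : ∀ x, 0 < f x) :
    ¬Monotone f := by
  intro hmono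
  have hconst : IntegrableOn (fun _ : ℝ => f 0) (Ioi 0) :=
    hf.integrableOn.mono' aestronglyMeasurable_const <|
      (ae_restrict_iff' measurableSet_Ioi).mpr <| ae_of_all _ fun x hx => by
        rw [norm_of_nonneg (hpos 0).le]
        exact hmono (le_of_lt hx)
  simp [IntegrableOn, integrable_const_iff, (hpos 0).ne', isFiniteMeasure_restrict] at hconst

lemma ConcaveOn.le_sub_mul_of_le {g : ℝ → ℝ} (hg : ConcaveOn ℝ univ g) {u v x : ℝ}
    (huv : u < v) (hvx : v ≤ x) :
    g x ≤ g v - (g u - g v) / (v - u) * (x - v) := by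
  rcases hvx.eq_or_lt with rfl | hvx
  · simp
  have hslope := hg.slope_anti_adjacent (mem_univ u) (mem_univ x) huv hvx
  rw [div_le_iff₀ (sub_pos.2 hvx)] at hslope
  have : (g v - g u) / (v - u) * (x - v) = -((g u - g v) / (v - u) * (x - v)) := by ring
  linarith

lemma ConcaveOn.exists_forall_nonneg_le_sub_mul {g : ℝ → ℝ} (hg : ConcaveOn ℝ univ g)
    {u v : ℝ} (huv : u < v) (hlt : g v < g u) :
    ∃ a > 0, ∃ b, ∀ x ≥ 0, g x ≤ b - a * x := by
  set a := (g u - g v) / (v - u)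
  have ha : 0 < a := div_pos (sub_pos.2 hlt) (sub_pos.2 huv)
  obtain ⟨M, hM⟩ : BddAbove (g '' Icc 0 v) :=
    isCompact_Icc.bddAbove_image ((hg.continuousOn isOpen_univ).mono (subset_univ _))
  refine ⟨a, ha, max (g v + a * v) (M + a * v), fun x hx => ?_⟩
  rcases le_total v x with hvx | hxv
  · have := hg.le_sub_mul_of_le huv hvx
    have : g v + a * v ≤ max (g v + a * v) (M + a * v) := le_max_left _ _
    linarith
  · have : g x ≤ M := hM ⟨x, ⟨hx, hxv⟩, rfl⟩
    have : M + a * v ≤ max (g v + a * v) (M + a * v) := le_max_right _ _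
    nlinarith

lemma exists_forall_nonneg_log_le_sub_mul {f : ℝ → ℝ} (hf : Integrable f)
    (hpos : ∀ x, 0 < f x) (hconc : ConcaveOn ℝ univ fun x => log (f x)) :
    ∃ a > 0, ∃ b, ∀ x ≥ 0, log (f x) ≤ b - a * x := by
  obtain ⟨u, v, huv, hlt⟩ : ∃ u v, u ≤ v ∧ f v < f u := by
    simpa [Monotone] using not_monotone_of_integrable_of_pos hf hpos
  exact hconc.exists_forall_nonneg_le_sub_mul (huv.lt_of_ne (by rintro rfl; exact hlt.false))
    (log_lt_log (hpos v) hlt)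

lemma exists_le_exp_sub_mul_abs {f : ℝ → ℝ} (hf : Integrable f) (hpos : ∀ x, 0 < f x)
    (hconc : ConcaveOn ℝ univ fun x => log (f x)) :
    ∃ a > 0, ∃ b, ∀ x, f x ≤ exp (b - a * |x|) := by
  have hconc_neg : ConcaveOn ℝ univ fun x => log (f (-x)) :=
    hconc.comp_linearMap (-LinearMap.id)
  obtain ⟨a₁, ha₁, b₁, hright⟩ := exists_forall_nonneg_log_le_sub_mul hf hpos hconc
  obtain ⟨a₂, ha₂, b₂, hleft⟩ :=
    exists_forall_nonneg_log_le_sub_mul hf.comp_neg (fun x => hpos (-x)) hconc_neg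
  refine ⟨min a₁ a₂, lt_min ha₁ ha₂, max b₁ b₂, fun x => ?_⟩
  rw [← exp_log (hpos x), exp_le_exp]
  rcases le_total 0 x with hx | hx
  · have hfx := hright x hx
    have : min a₁ a₂ * x ≤ a₁ * x := mul_le_mul_of_nonneg_right (min_le_left _ _) hx
    rw [abs_of_nonneg hx]
    linarith [le_max_left b₁ b₂]
  · have hfx := hleft (-x) (neg_nonneg.2 hx)
    have : min a₁ a₂ * -x ≤ a₂ * -x := mul_le_mul_of_nonneg_right (min_le_right _ _) (by linarith)
    rw [neg_neg] at hfx
    rw [abs_of_nonpos hx]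
    linarith [le_max_right b₁ b₂]

theorem logconcave_density_mgf_finite_near_zero_general
    (f : ℝ → ℝ)
    (hpos : ∀ x, 0 < f x)
    (hint : ∫ x, f x = 1)
    (hconc : ConcaveOn ℝ Set.univ (fun x => Real.log (f x))) :
    ∃ a > 0, ∀ t : ℝ, |t| < a → Integrable (fun s : ℝ => Real.exp (t * s) * f s) := by
  have hf : Integrable f := integrable_of_integral_eq_one hint
  obtain ⟨a, ha, b, hfb⟩ := exists_le_exp_sub_mul_abs hf hpos hconc
  refine ⟨a, ha, fun t ht => ?_⟩
  refine ((integrable_exp_neg_mul_abs (sub_pos.2 ht)).const_mul (exp b)).mono'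
    ((continuous_exp.comp (continuous_const_mul t)).aestronglyMeasurable.mul
      hf.aestronglyMeasurable) (ae_of_all _ fun s => ?_)
  have hts : t * s ≤ |t| * |s| := (le_abs_self _).trans (abs_mul t s).le
  rw [norm_of_nonneg (mul_pos (exp_pos _) (hpos s)).le]
  calc exp (t * s) * f s ≤ exp (t * s) * exp (b - a * |s|) := by gcongr; exact hfb s
    _ = exp b * exp (t * s - a * |s|) := by rw [← exp_add, ← exp_add]; ring_nf
    _ ≤ exp b * exp (-(a - |t|) * |s|) := by gcongr; linarith

theorem logconcave_density_mgf_finite_near_zero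
    (f : ℝ → ℝ)
    (hmeas : Measurable f)
    (hpos : ∀ x, 0 < f x)
    (hint : ∫ x, f x = 1)
    (hconc : ConcaveOn ℝ Set.univ (fun x => Real.log (f x))) :
    ∃ a > 0, ∀ t : ℝ, |t| < a → Integrable (fun s : ℝ => Real.exp (t * s) * f s) :=
  logconcave_density_mgf_finite_near_zero_general f hpos hint hconc
end

section
/- Let f : ℝ → ℝ be a positive differentiable probability density with log f concave. Then the function s ↦ s·u(s), where u(s) = f'(s)/f(s), is unbounded on ℝ: for every K > 0 there exists s with |s·u(s)| > K. -/
/-! If `|s · u(s)| ≤ K` everywhere, the score `u = f'/f = (log f)'` is antitone by log-concavity,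
so a negative value `u(t) < 0` would force `s · u(s) ≤ s · u(t) → -∞`. Hence `u ≥ 0`, `f` is
monotone and positive, and such a function is not integrable, so `∫ f = 0 ≠ 1`. -/

open MeasureTheory Real Filter

lemma antitone_deriv_div_of_concaveOn_log {f : ℝ → ℝ} (hpos : ∀ x, 0 < f x)
    (hdiff : Differentiable ℝ f) (hconc : ConcaveOn ℝ Set.univ (fun x => log (f x))) :
    Antitone (fun x => deriv f x / f x) := by
  have hlog : ∀ x, HasDerivAt (fun x => log (f x)) (deriv f x / f x) x :=
    fun x => (hdiff x).hasDerivAt.log (hpos x).ne'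
  intro a b hab
  have := hconc.antitoneOn_deriv (fun x _ => (hlog x).differentiableAt)
    (Set.mem_univ a) (Set.mem_univ b) hab
  rwa [(hlog a).deriv, (hlog b).deriv] at this

lemma nonneg_of_antitone_of_eventually_le_mul {u : ℝ → ℝ} {K : ℝ} (hu : Antitone u)
    (hK : ∀ᶠ s in atTop, -K ≤ s * u s) (t : ℝ) : 0 ≤ u t := by
  by_contra! hneg
  have hdiv : Tendsto (fun s => s * u t) atTop atBot := tendsto_id.atTop_mul_const_of_neg hneg
  obtain ⟨s, hsK, hst, hs0, hsmall⟩ :=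
    (hK.and ((eventually_ge_atTop t).and ((eventually_ge_atTop 0).and
      (hdiv.eventually_lt_atBot (-K))))).exists
  have : s * u s ≤ s * u t := mul_le_mul_of_nonneg_left (hu hst) hs0
  linarith

lemma Monotone.not_integrable {f : ℝ → ℝ} (hf : Monotone f) {a : ℝ} (ha : 0 < f a) :
    ¬ Integrable f := by
  intro hint
  have hconst : IntegrableOn (fun _ => f a) (Set.Ioi a) := by
    refine hint.integrableOn.mono' aestronglyMeasurable_const ?_
    refine (ae_restrict_iff' measurableSet_Ioi).mpr (ae_of_all _ fun x hx => ?_)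
    rw [norm_of_nonneg ha.le]
    exact hf (le_of_lt hx)
  simp [integrableOn_const_iff, ha.ne'] at hconst

theorem s_times_score_unbounded
    (f : ℝ → ℝ)
    (hpos : ∀ x, 0 < f x)
    (hdiff : Differentiable ℝ f)
    (hint : ∫ x, f x = 1)
    (hconc : ConcaveOn ℝ Set.univ (fun x => Real.log (f x))) :
    ∀ K > 0, ∃ s : ℝ, |s * (deriv f s / f s)| > K := by
  intro K _
  by_contra! hbdd
  have hscore_nonneg : ∀ t, 0 ≤ deriv f t / f t :=
    nonneg_of_antitone_of_eventually_le_mul (antitone_deriv_div_of_concaveOn_log hpos hdiff hconc)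
      (Eventually.of_forall fun s => neg_le_of_abs_le (hbdd s))
  have hmono : Monotone f := monotone_of_deriv_nonneg hdiff fun x => by
    simpa [div_mul_cancel₀ _ (hpos x).ne'] using mul_nonneg (hscore_nonneg x) (hpos x).le
  rw [integral_undef (hmono.not_integrable (hpos 0))] at hint
  exact zero_ne_one hint
end

section
/- Let densities g, f on ℝ and β > 0, and define the density power divergence d_β(g,f) = ∫ [f^{1+β} - (1+1/β)·f^β·g + (1/β)·g^{1+β}] dλ. Then d_β(g,f) ≥ 0, with equality if and only if g = f almost everywhere. -/
open MeasureTheory Real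

/-- Strict tangent-line inequality for `x ^ p`, `p > 1`, at a point `t ≥ 0`. -/
lemma rpow_tangent_strict {p : ℝ} (hp : 1 < p) {t a : ℝ} (ht : 0 ≤ t) (ha : 0 ≤ a)
    (hne : t ≠ a) : p * t ^ (p - 1) * (a - t) < a ^ p - t ^ p := by
  have hp0 : 0 < p := lt_trans one_pos hp
  have hderiv : ∀ x : ℝ, HasDerivAt (fun y : ℝ => y ^ p) (p * x ^ (p - 1)) x := fun x =>
    Real.hasDerivAt_rpow_const (Or.inr hp.le)
  rcases lt_or_gt_of_ne hne with hlt | hlt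
  · obtain ⟨c, hc, hceq⟩ := exists_hasDerivAt_eq_slope (fun y : ℝ => y ^ p)
      (fun x => p * x ^ (p - 1)) hlt
      (fun x _ => (hderiv x).continuousAt.continuousWithinAt) (fun x _ => hderiv x)
    have hd : a - t ≠ 0 := by intro h; apply hne; linarith
    rw [eq_div_iff hd] at hceq
    have heq : a ^ p - t ^ p = p * c ^ (p - 1) * (a - t) := hceq.symm
    have hmono : t ^ (p - 1) < c ^ (p - 1) :=
      Real.rpow_lt_rpow ht hc.1 (by linarith)
    have := mul_lt_mul_of_pos_right (mul_lt_mul_of_pos_left hmono hp0) (sub_pos.2 hlt)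
    linarith
  · obtain ⟨c, hc, hceq⟩ := exists_hasDerivAt_eq_slope (fun y : ℝ => y ^ p)
      (fun x => p * x ^ (p - 1)) hlt
      (fun x _ => (hderiv x).continuousAt.continuousWithinAt) (fun x _ => hderiv x)
    have hd : t - a ≠ 0 := by intro h; apply hne; linarith
    rw [eq_div_iff hd] at hceq
    have heq : t ^ p - a ^ p = p * c ^ (p - 1) * (t - a) := hceq.symm
    have hmono : c ^ (p - 1) < t ^ (p - 1) :=
      Real.rpow_lt_rpow (le_trans ha hc.1.le) hc.2 (by linarith)
    have := mul_lt_mul_of_pos_right (mul_lt_mul_of_pos_left hmono hp0) (sub_pos.2 hlt)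
    linarith

lemma dpd_pointwise {β : ℝ} (hβ : 0 < β) {t a : ℝ} (ht : 0 ≤ t) (ha : 0 ≤ a) :
    0 ≤ t ^ (1 + β) - (1 + 1 / β) * t ^ β * a + (1 / β) * a ^ (1 + β) ∧
      (t ^ (1 + β) - (1 + 1 / β) * t ^ β * a + (1 / β) * a ^ (1 + β) = 0 ↔ a = t) := by
  have hT : t ^ (1 + β) = t * t ^ β := by
    rw [Real.rpow_add' ht (by positivity), Real.rpow_one]
  by_cases hne : t = a
  · subst hne
    have hzero : t ^ (1 + β) - (1 + 1 / β) * t ^ β * t + 1 / β * t ^ (1 + β) = 0 := by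
      rw [hT]; field_simp; ring
    exact ⟨le_of_eq hzero.symm, fun _ => rfl, fun _ => hzero⟩
  · have key := rpow_tangent_strict (p := 1 + β) (by linarith) ht ha hne
    have hpm : (1 : ℝ) + β - 1 = β := by ring
    rw [hpm] at key
    have hpos : 0 < t ^ (1 + β) - (1 + 1 / β) * t ^ β * a + (1 / β) * a ^ (1 + β) := by
      have hβ' : β ≠ 0 := ne_of_gt hβ
      have hmul : 0 < β * (t ^ (1 + β) - (1 + 1 / β) * t ^ β * a + (1 / β) * a ^ (1 + β)) := by
        have heq2 : β * (t ^ (1 + β) - (1 + 1 / β) * t ^ β * a + (1 / β) * a ^ (1 + β))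
            = a ^ (1 + β) - t ^ (1 + β) - (1 + β) * t ^ β * (a - t) := by
          rw [hT]; field_simp; ring
        rw [heq2]; linarith
      nlinarith [hmul]
    exact ⟨hpos.le, by constructor <;> intro h <;> [linarith; exact absurd h.symm hne]⟩

theorem dpd_nonneg_and_eq_zero_iff
    (f g : ℝ → ℝ) (β : ℝ) (hβ : 0 < β)
    (hfmeas : Measurable f) (hgmeas : Measurable g)
    (hfnonneg : ∀ x, 0 ≤ f x) (hgnonneg : ∀ x, 0 ≤ g x)
    (hfint : ∫ x, f x = 1) (hgint : ∫ x, g x = 1)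
    (h1 : Integrable (fun x => f x ^ (1 + β)))
    (h2 : Integrable (fun x => f x ^ β * g x))
    (h3 : Integrable (fun x => g x ^ (1 + β))) :
    0 ≤ ∫ x : ℝ, (f x ^ (1 + β) - (1 + 1 / β) * f x ^ β * g x + (1 / β) * g x ^ (1 + β))
    ∧ ((∫ x : ℝ, (f x ^ (1 + β) - (1 + 1 / β) * f x ^ β * g x + (1 / β) * g x ^ (1 + β))) = 0
        ↔ g =ᵐ[volume] f) := by
  set F : ℝ → ℝ := fun x =>
    f x ^ (1 + β) - (1 + 1 / β) * f x ^ β * g x + (1 / β) * g x ^ (1 + β) with hF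
  have hFnonneg : ∀ x, 0 ≤ F x := fun x =>
    (dpd_pointwise hβ (hfnonneg x) (hgnonneg x)).1
  have hFzero : ∀ x, F x = 0 ↔ g x = f x := fun x =>
    (dpd_pointwise hβ (hfnonneg x) (hgnonneg x)).2
  have hFint : Integrable F := by
    have : F = fun x => (f x ^ (1 + β) - (1 + 1 / β) * (f x ^ β * g x))
        + (1 / β) * g x ^ (1 + β) := by
      funext x; simp [hF]; ring
    rw [this]
    exact (h1.sub (h2.const_mul _)).add (h3.const_mul _)
  refine ⟨integral_nonneg hFnonneg, ?_⟩
  rw [integral_eq_zero_iff_of_nonneg hFnonneg hFint]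
  constructor
  · intro h
    filter_upwards [h] with x hx
    exact (hFzero x).1 hx
  · intro h
    filter_upwards [h] with x hx
    exact (hFzero x).2 hx
end
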